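/- Let A be a Banach algebra with unit, H : ℝ → A continuous, t ≥ 0, n_1, …, n_k ≥ 1 with n = n_1 + ⋯ + n_k, and S_j ⊆ {1,…,n_j−1} for 1 ≤ j ≤ k. Then H_{D_{S_1}^{(n_1)}}(t) · H_{D_{S_2}^{(n_2)}}(t) ⋯ H_{D_{S_k}^{(n_k)}}(t) = H_{D_T^{(n)}}(t), where T := S_1 ∪ {n_1} ∪ (S_2+n_1) ∪ {n_1+n_2} ∪ ⋯ ∪ {n_1+⋯+n_{k−1}} ∪ (S_k + n_1+⋯+n_{k−1}) and S + m := {s + m : s ∈ S}. -/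

import Mathlib

open MeasureTheory

open Classical in
/-- The descent set of a permutation `σ ∈ S_n` (1-based convention):
`Desc(σ) = {i ∈ {1,…,n−1} : σ(i) > σ(i+1)}`. -/
noncomputable def descSet {n : ℕ} (σ : Equiv.Perm (Fin n)) : Finset ℕ :=
  (Finset.Ioo 0 n).filter
    (fun i => ∃ h : i < n, σ ⟨i, h⟩ < σ ⟨i - 1, lt_of_le_of_lt (Nat.sub_le i 1) h⟩)

/-- The simplex `Δ_t^n = {0 ≤ t₁ ≤ ⋯ ≤ tₙ ≤ t}` inside `Fin n → ℝ`. -/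
def simplex (n : ℕ) (t : ℝ) : Set (Fin n → ℝ) :=
  {u | (∀ i, 0 ≤ u i ∧ u i ≤ t) ∧ ∀ i j, i ≤ j → u i ≤ u j}

variable {A : Type*} [NormedRing A] [NormedAlgebra ℝ A] [CompleteSpace A]

/-- The iterated integral `H_σ(t) = ∫_{Δ_t^n} H(t_{σ(1)})⋯H(t_{σ(n)}) dt₁⋯dtₙ`. -/
noncomputable def Hperm (H : ℝ → A) {n : ℕ} (σ : Equiv.Perm (Fin n)) (t : ℝ) : A :=
  ∫ u in simplex n t, (List.ofFn (fun j => H (u (σ j)))).prod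

/-- `H_n(t) = ∫_{Δ_t^n} H(t₁)⋯H(tₙ) dt₁⋯dtₙ`, with `H_0(t) = 1`. -/
noncomputable def Hn (H : ℝ → A) : ℕ → ℝ → A
  | 0, _ => 1
  | (n + 1), t => Hperm H (1 : Equiv.Perm (Fin (n + 1))) t

/-- The iterated integral evaluated on the Dynkin element:
`H_{𝒟_m}(t) = Σ_{j=0}^{m-1} (-1)^j H_{D_{={1,…,j}}^{(m)}}(t)`. -/
noncomputable def HDyn (H : ℝ → A) (m : ℕ) (t : ℝ) : A :=
  ∑ j ∈ Finset.range m, (-1 : ℝ) ^ j •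
    ∑ σ ∈ Finset.univ.filter
        (fun σ : Equiv.Perm (Fin m) => descSet σ = Finset.Icc 1 j),
      Hperm H σ t

/-!
Off the null set of points with two equal coordinates, the cube `[0, t]ⁿ` is tiled by the regions
`{t_{σ⁻¹(1)} < ⋯ < t_{σ⁻¹(n)}}`, and a point of the region of `σ` satisfies `t_i ≤ t_{i+1}` for all
`i ∉ S` exactly when `Desc(σ) ⊆ S`. Hence `H_{D_S^{(n)}}(t)` is the integral of `H(t_1)⋯H(t_n)` over
the part of the cube where `t_i ≤ t_{i+1}` for `i ∉ S`. For the concatenated set `T` this region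
is, once the variables are split into consecutive blocks, the product of the regions of the `S_j`
(the block boundaries lie in `T`, so they impose no order between blocks), and Fubini factors the
integral.
-/

open Function

theorem descSet_subset_iff {n : ℕ} (σ : Equiv.Perm (Fin n)) (S : Finset ℕ) :
    descSet σ ⊆ S ↔
      ∀ i (hi : i + 1 < n), i + 1 ∉ S → σ ⟨i, Nat.lt_of_succ_lt hi⟩ < σ ⟨i + 1, hi⟩ := by
  constructor
  · intro h i hi hiS
    by_contra hle
    refine hiS (h ?_)
    have hne : σ ⟨i + 1, hi⟩ ≠ σ ⟨i, Nat.lt_of_succ_lt hi⟩ :=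
      σ.injective.ne (by simp [Fin.ext_iff])
    simpa [descSet] using ⟨hi, lt_of_le_of_ne (not_lt.1 hle) hne⟩
  · intro h x hx
    obtain ⟨⟨hx0, -⟩, hxn, hlt⟩ := by simpa [descSet] using hx
    obtain ⟨i, rfl⟩ : ∃ i, x = i + 1 := ⟨x - 1, by omega⟩
    by_contra hiS
    exact (h i hxn hiS).not_gt (by simpa using hlt)

def cube (n : ℕ) (t : ℝ) : Set (Fin n → ℝ) := Set.univ.pi fun _ => Set.Icc 0 t

theorem isCompact_cube (n : ℕ) (t : ℝ) : IsCompact (cube n t) :=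
  isCompact_univ_pi fun _ => isCompact_Icc

theorem comp_mem_cube_iff {n : ℕ} {v : Fin n → ℝ} {t : ℝ} (σ : Equiv.Perm (Fin n)) :
    v ∘ σ ∈ cube n t ↔ v ∈ cube n t := by
  simp only [cube, Set.mem_univ_pi, comp_apply]
  exact σ.forall_congr_right (q := fun i => v i ∈ Set.Icc 0 t)

def orderedProd {M : Type*} [Monoid M] (H : ℝ → M) {n : ℕ} (v : Fin n → ℝ) : M :=
  (List.ofFn fun j => H (v j)).prod

theorem continuous_orderedProd {M : Type*} [Monoid M] [TopologicalSpace M] [ContinuousMul M]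
    {H : ℝ → M} (hH : Continuous H) (n : ℕ) : Continuous (orderedProd H : (Fin n → ℝ) → M) := by
  unfold orderedProd
  simp only [List.ofFn_eq_map]
  exact continuous_list_prod _ fun i _ => hH.comp (continuous_apply i)

theorem integrableOn_orderedProd {R : Type*} [NormedRing R] {H : ℝ → R} (hH : Continuous H)
    {n : ℕ} {t : ℝ} {s : Set (Fin n → ℝ)} (hs : s ⊆ cube n t) :
    IntegrableOn (orderedProd H) s :=
  ((continuous_orderedProd hH n).continuousOn.integrableOn_compact (isCompact_cube n t)).mono_set hs

theorem orderedProd_add {M : Type*} [Monoid M] (H : ℝ → M) {m p : ℕ} (v : Fin (m + p) → ℝ) :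
    orderedProd H v =
      orderedProd H (fun i => v (Fin.castAdd p i)) *
        orderedProd H (fun j => v (Fin.natAdd m j)) := by
  simp only [orderedProd, List.ofFn_add, List.prod_append]
  rfl

theorem volume_setOf_apply_eq {ι : Type*} [Fintype ι] {i j : ι} (hij : i ≠ j) :
    volume {v : ι → ℝ | v i = v j} = 0 := by
  classical
  let f : (ι → ℝ) →ₗ[ℝ] ℝ := LinearMap.proj (R := ℝ) (φ := fun _ : ι => ℝ) i - LinearMap.proj j
  have hf : f ≠ 0 := fun h => by
    simpa [f, Pi.single_eq_of_ne hij.symm] using LinearMap.congr_fun h (Pi.single i 1)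
  have : {v : ι → ℝ | v i = v j} = LinearMap.ker f := by
    ext v
    simp [f, sub_eq_zero]
  rw [this]
  exact Measure.addHaar_submodule _ _ (mt LinearMap.ker_eq_top.1 hf)

theorem ae_injective (ι : Type*) [Fintype ι] : ∀ᵐ v : ι → ℝ, Injective v := by
  have : ∀ i j : ι, ∀ᵐ v : ι → ℝ, v i = v j → i = j := fun i j => by
    by_cases hij : i = j
    · exact Filter.Eventually.of_forall fun _ _ => hij
    · exact measure_mono_null (fun v hv => by simpa [hij] using hv) (volume_setOf_apply_eq hij)
  filter_upwards [ae_all_iff.2 fun i => ae_all_iff.2 (this i)] with v hv i j using hv i j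

section

variable {B : Type*} [NormedRing B] [NormedAlgebra ℝ B]

theorem Hperm_eq_setIntegral (H : ℝ → B) {n : ℕ} (σ : Equiv.Perm (Fin n)) (t : ℝ) :
    Hperm H σ t = ∫ v in {v | v ∈ cube n t ∧ Monotone (v ∘ σ.symm)}, orderedProd H v := by
  let φ := MeasurableEquiv.arrowCongr' σ.symm (MeasurableEquiv.refl ℝ)
  have hφ : MeasurePreserving φ := volume_preserving_arrowCongr' _ _ (MeasurePreserving.id _)
  have hpre : φ ⁻¹' {v | v ∈ cube n t ∧ Monotone (v ∘ σ.symm)} = simplex n t := by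
    ext u
    change u ∘ σ ∈ cube n t ∧ Monotone (u ∘ σ ∘ σ.symm) ↔ _
    simp only [comp_mem_cube_iff, Equiv.self_comp_symm, comp_id]
    simp only [simplex, cube, Set.mem_univ_pi, Set.mem_Icc, Set.mem_ofPred_eq]
    rfl
  rw [← hφ.setIntegral_preimage_emb φ.measurableEmbedding, hpre]
  rfl

def sortedRegion {n : ℕ} (σ : Equiv.Perm (Fin n)) (t : ℝ) : Set (Fin n → ℝ) :=
  {v | v ∈ cube n t ∧ StrictMono (v ∘ σ.symm)}

theorem measurableSet_sortedRegion {n : ℕ} (σ : Equiv.Perm (Fin n)) (t : ℝ) :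
    MeasurableSet (sortedRegion σ t) := by
  refine (MeasurableSet.univ_pi fun _ => measurableSet_Icc).inter ?_
  show MeasurableSet {v : Fin n → ℝ | ∀ ⦃a b⦄, a < b → v (σ.symm a) < v (σ.symm b)}
  simp only [Set.ofPred_forall]
  exact .iInter fun i => .iInter fun j => .iInter fun _ =>
    measurableSet_lt (measurable_pi_apply _) (measurable_pi_apply _)

theorem setOf_monotone_ae_eq_sortedRegion {n : ℕ} (σ : Equiv.Perm (Fin n)) (t : ℝ) :
    {v | v ∈ cube n t ∧ Monotone (v ∘ σ.symm)} =ᵐ[volume] sortedRegion σ t := by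
  filter_upwards [ae_injective (Fin n)] with v hv
  exact propext <| and_congr_right fun _ =>
    ⟨fun h => h.strictMono_of_injective (hv.comp σ.symm.injective), StrictMono.monotone⟩

theorem symm_eq_sort_of_mem_sortedRegion {n : ℕ} {σ : Equiv.Perm (Fin n)} {t : ℝ}
    {v : Fin n → ℝ} (hv : v ∈ sortedRegion σ t) : σ.symm = Tuple.sort v :=
  Tuple.eq_sort_iff.2 ⟨hv.2.monotone, fun _ _ hij heq => absurd heq (hv.2 hij).ne⟩

theorem mem_sortedRegion_sort {n : ℕ} {t : ℝ} {v : Fin n → ℝ} (hv : Injective v)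
    (hc : v ∈ cube n t) : v ∈ sortedRegion (Tuple.sort v).symm t :=
  ⟨hc, (Tuple.monotone_sort v).strictMono_of_injective (hv.comp (Tuple.sort v).injective)⟩

/-- With 0-based coordinates the pair `(v i, v (i + 1))` is `(t_{i+1}, t_{i+2})`, so its order is
left free exactly at the descent position `i + 1 ∈ S`. -/
def descentRegion (n : ℕ) (S : Finset ℕ) (t : ℝ) : Set (Fin n → ℝ) :=
  {v | v ∈ cube n t ∧
    ∀ i (hi : i + 1 < n), i + 1 ∉ S → v ⟨i, Nat.lt_of_succ_lt hi⟩ ≤ v ⟨i + 1, hi⟩}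

theorem mem_descentRegion_iff_of_mem_sortedRegion {n : ℕ} {σ : Equiv.Perm (Fin n)}
    {S : Finset ℕ} {t : ℝ} {v : Fin n → ℝ} (hv : v ∈ sortedRegion σ t) :
    v ∈ descentRegion n S t ↔ descSet σ ⊆ S := by
  have hle : ∀ a b : Fin n, a ≠ b → (v a ≤ v b ↔ σ a < σ b) := fun a b hab => by
    have h := hv.2.le_iff_le (a := σ a) (b := σ b)
    simp only [comp_apply, Equiv.symm_apply_apply] at h
    rw [h]
    exact (σ.injective.ne hab).le_iff_lt
  rw [descSet_subset_iff, descentRegion, Set.mem_ofPred_eq, and_iff_right hv.1]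
  exact forall₂_congr fun i hi => imp_congr_right fun _ => hle _ _ (by simp [Fin.ext_iff])

/-- The iterated integral `H_{D_S^{(n)}}(t)`, see `sum_Hperm_eq_descentIntegral`. -/
noncomputable def descentIntegral (H : ℝ → B) (n : ℕ) (S : Finset ℕ) (t : ℝ) : B :=
  ∫ v in descentRegion n S t, orderedProd H v

theorem sum_Hperm_eq_descentIntegral {H : ℝ → B} (hH : Continuous H) (n : ℕ) (S : Finset ℕ)
    (t : ℝ) :
    ∑ σ ∈ Finset.univ.filter (fun σ : Equiv.Perm (Fin n) => descSet σ ⊆ S), Hperm H σ t =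
      descentIntegral H n S t := by
  set perms := Finset.univ.filter (fun σ : Equiv.Perm (Fin n) => descSet σ ⊆ S)
  have hunion : (⋃ σ ∈ perms, sortedRegion σ t) =ᵐ[volume] descentRegion n S t := by
    filter_upwards [ae_injective (Fin n)] with v hv
    refine propext ⟨fun h => ?_, fun h => ?_⟩
    · obtain ⟨σ, hσ, hvσ⟩ := Set.mem_iUnion₂.1 h
      exact (mem_descentRegion_iff_of_mem_sortedRegion hvσ).2 (Finset.mem_filter.1 hσ).2
    · have hvσ := mem_sortedRegion_sort hv h.1
      exact Set.mem_iUnion₂.2 ⟨_, Finset.mem_filter.2 ⟨Finset.mem_univ _,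
        (mem_descentRegion_iff_of_mem_sortedRegion hvσ).1 h⟩, hvσ⟩
  have hdisj : Set.Pairwise (perms : Set (Equiv.Perm (Fin n))) (Disjoint on (sortedRegion · t)) :=
    fun σ _ τ _ hστ => Set.disjoint_left.2 fun v hσ hτ => hστ <| Equiv.symm_bijective.injective <|
      (symm_eq_sort_of_mem_sortedRegion hσ).trans (symm_eq_sort_of_mem_sortedRegion hτ).symm
  rw [descentIntegral, ← setIntegral_congr_set hunion, integral_biUnion_finset _
    (fun σ _ => measurableSet_sortedRegion σ t) hdisj
    (fun σ _ => integrableOn_orderedProd hH fun v hv => hv.1)]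
  exact Finset.sum_congr rfl fun σ _ =>
    (Hperm_eq_setIntegral H σ t).trans
      (setIntegral_congr_set (setOf_monotone_ae_eq_sortedRegion σ t))

theorem descentIntegral_zero [CompleteSpace B] (H : ℝ → B) (S : Finset ℕ) (t : ℝ) :
    descentIntegral H 0 S t = 1 := by
  have : descentRegion 0 S t = Set.univ :=
    Set.eq_univ_of_forall fun v => ⟨fun i _ => i.elim0, fun i hi => absurd hi (by omega)⟩
  rw [descentIntegral, this, volume_pi, Measure.pi_of_empty, Measure.restrict_univ]
  simp [orderedProd]

def finAddSplit (α : Type*) [MeasurableSpace α] (m p : ℕ) :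
    (Fin (m + p) → α) ≃ᵐ (Fin m → α) × (Fin p → α) :=
  (MeasurableEquiv.piCongrLeft (fun _ => α) finSumFinEquiv).symm.trans
    (MeasurableEquiv.sumPiEquivProdPi fun _ => α)

theorem finAddSplit_apply (α : Type*) [MeasurableSpace α] (m p : ℕ) (v : Fin (m + p) → α) :
    finAddSplit α m p v = (fun i => v (Fin.castAdd p i), fun j => v (Fin.natAdd m j)) := by
  ext <;> simp [finAddSplit, MeasurableEquiv.coe_sumPiEquivProdPi, MeasurableEquiv.piCongrLeft,
    Equiv.sumPiEquivProdPi, Equiv.piCongrLeft]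

theorem measurePreserving_finAddSplit (α : Type*) [MeasureSpace α]
    [SigmaFinite (volume : Measure α)] (m p : ℕ) :
    MeasurePreserving (finAddSplit α m p) :=
  (volume_measurePreserving_sumPiEquivProdPi _).comp
    (volume_measurePreserving_piCongrLeft (fun _ => α) finSumFinEquiv).symm

theorem mem_cube_add {m p : ℕ} {t : ℝ} (v : Fin (m + p) → ℝ) :
    v ∈ cube (m + p) t ↔
      (fun i => v (Fin.castAdd p i)) ∈ cube m t ∧ (fun j => v (Fin.natAdd m j)) ∈ cube p t := by
  simp only [cube, Set.mem_univ_pi]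
  exact Fin.forall_fin_add _

theorem descentRegion_add {m p : ℕ} {S₁ : Finset ℕ} (hS₁ : ∀ x ∈ S₁, x ≤ m) (S₂ : Finset ℕ)
    (t : ℝ) :
    descentRegion (m + p) (S₁ ∪ insert m (S₂.image (· + m))) t =
      finAddSplit ℝ m p ⁻¹' (descentRegion m S₁ t ×ˢ descentRegion p S₂ t) := by
  ext v
  simp only [Set.mem_preimage, finAddSplit_apply, Set.mem_prod, descentRegion, Set.mem_ofPred_eq,
    mem_cube_add, Finset.mem_union, Finset.mem_insert, Finset.mem_image, not_or, not_exists,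
    not_and]
  constructor
  · rintro ⟨⟨hc₁, hc₂⟩, h⟩
    refine ⟨⟨hc₁, fun i hi hiS => h i (by omega) ⟨hiS, by omega, fun s _ => by omega⟩⟩,
      ⟨hc₂, fun j hj hjS => h (m + j) (by omega) ⟨fun hS => ?_, by omega, fun s hs => ?_⟩⟩⟩
    · exact absurd (hS₁ _ hS) (by omega)
    · exact fun hsj => hjS (by rwa [show j + 1 = s by omega])
  · rintro ⟨⟨hc₁, h₁⟩, hc₂, h₂⟩
    refine ⟨⟨hc₁, hc₂⟩, fun i hi ⟨hiS₁, him, hiS₂⟩ => ?_⟩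
    rcases lt_or_gt_of_ne him with him | him
    · exact h₁ i him hiS₁
    · obtain ⟨j, rfl⟩ : ∃ j, i = m + j := ⟨i - m, by omega⟩
      exact h₂ j (by omega) fun hj => hiS₂ _ hj (by omega)

theorem setIntegral_prod_mul_of_integrableOn {α β R : Type*} [MeasurableSpace α]
    [MeasurableSpace β] {μ : Measure α} {ν : Measure β} [SFinite μ] [SFinite ν] [NormedRing R]
    [NormedAlgebra ℝ R] {f : α → R} {g : β → R} {s : Set α} {t : Set β}
    (hf : IntegrableOn f s μ) (hg : IntegrableOn g t ν) :
    ∫ z in s ×ˢ t, f z.1 * g z.2 ∂μ.prod ν = (∫ x in s, f x ∂μ) * ∫ y in t, g y ∂ν := by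
  rw [← Measure.prod_restrict, integral_prod _ (hf.mul_prod hg)]
  simp_rw [integral_const_mul_of_integrable hg, integral_mul_const_of_integrable hf]

theorem descentIntegral_mul {H : ℝ → B} (hH : Continuous H) {m p : ℕ} {S₁ : Finset ℕ}
    (hS₁ : ∀ x ∈ S₁, x ≤ m) (S₂ : Finset ℕ) (t : ℝ) :
    descentIntegral H m S₁ t * descentIntegral H p S₂ t =
      descentIntegral H (m + p) (S₁ ∪ insert m (S₂.image (· + m))) t := by
  calc _ = ∫ z in descentRegion m S₁ t ×ˢ descentRegion p S₂ t,
        orderedProd H z.1 * orderedProd H z.2 := by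
        rw [Measure.volume_eq_prod, setIntegral_prod_mul_of_integrableOn
          (integrableOn_orderedProd hH fun v hv => hv.1)
          (integrableOn_orderedProd hH fun v hv => hv.1)]
        rfl
    _ = ∫ v in finAddSplit ℝ m p ⁻¹' (descentRegion m S₁ t ×ˢ descentRegion p S₂ t),
        orderedProd H (finAddSplit ℝ m p v).1 * orderedProd H (finAddSplit ℝ m p v).2 :=
      ((measurePreserving_finAddSplit ℝ m p).setIntegral_preimage_emb
        (finAddSplit ℝ m p).measurableEmbedding _ _).symm
    _ = _ := by
      simp_rw [descentIntegral, descentRegion_add hS₁, finAddSplit_apply, ← orderedProd_add]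

theorem descentIntegral_congr (H : ℝ → B) (n : ℕ) {S S' : Finset ℕ}
    (h : ∀ x, 0 < x → (x ∈ S ↔ x ∈ S')) (t : ℝ) :
    descentIntegral H n S t = descentIntegral H n S' t := by
  have : descentRegion n S t = descentRegion n S' t := by
    ext v
    refine and_congr_right fun _ => forall₂_congr fun i _ => ?_
    rw [h (i + 1) i.succ_pos]
  rw [descentIntegral, descentIntegral, this]

/-- The set `T` of the paper, for consecutive blocks starting at positions `N 0, N 1, …`. -/
def concatDescentSet {k : ℕ} (N : ℕ → ℕ) (S : Fin k → Finset ℕ) : Finset ℕ :=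
  (Finset.Ico 1 k).image N ∪ Finset.univ.biUnion fun i => (S i).image (· + N i)

theorem le_of_mem_concatDescentSet {k : ℕ} {b : Fin k → ℕ} {S : Fin k → Finset ℕ} {N : ℕ → ℕ}
    (hN : ∀ i : Fin k, N (i + 1) = N i + b i) (hS : ∀ i, ∀ x ∈ S i, x ≤ b i) {x : ℕ}
    (hx : x ∈ concatDescentSet N S) : x ≤ N k := by
  have hmono : ∀ i j, i ≤ j → j ≤ k → N i ≤ N j := fun i j hij hjk => by
    induction j, hij using Nat.le_induction with
    | base => rfl
    | succ j _ ih =>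
      exact (ih (by omega)).trans ((Nat.le_add_right _ _).trans_eq (hN ⟨j, by omega⟩).symm)
  simp only [concatDescentSet, Finset.mem_union, Finset.mem_image, Finset.mem_Ico,
    Finset.mem_biUnion, Finset.mem_univ, true_and] at hx
  rcases hx with ⟨a, ⟨-, ha⟩, rfl⟩ | ⟨i, s, hs, rfl⟩
  · exact hmono a k ha.le le_rfl
  · have hs := hS i s hs
    have hNi := hN i
    have hNk := hmono (i + 1) k i.2 le_rfl
    omega

theorem mem_concatDescentSet_succ {k : ℕ} {S : Fin (k + 1) → Finset ℕ} {N : ℕ → ℕ}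
    (hN0 : N 0 = 0) {x : ℕ} (hx : 0 < x) :
    x ∈ concatDescentSet N S ↔
      x ∈ concatDescentSet N (fun i => S i.castSucc) ∪
        insert (N k) ((S (Fin.last k)).image (· + N k)) := by
  have hboundary : (∃ a, (1 ≤ a ∧ a < k + 1) ∧ N a = x) ↔
      (∃ a, (1 ≤ a ∧ a < k) ∧ N a = x) ∨ x = N k := by
    constructor
    · rintro ⟨a, ⟨ha, hak⟩, rfl⟩
      rcases Nat.lt_succ_iff_lt_or_eq.1 hak with hak | rfl
      exacts [Or.inl ⟨a, ⟨ha, hak⟩, rfl⟩, Or.inr rfl]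
    · rintro (⟨a, ⟨ha, hak⟩, rfl⟩ | rfl)
      · exact ⟨a, ⟨ha, by omega⟩, rfl⟩
      · refine ⟨k, ⟨Nat.pos_of_ne_zero ?_, by omega⟩, rfl⟩
        rintro rfl
        exact hx.ne' hN0
  simp only [concatDescentSet, Finset.mem_union, Finset.mem_insert, Finset.mem_image,
    Finset.mem_Ico, Finset.mem_biUnion, Finset.mem_univ, true_and, Fin.exists_fin_succ',
    Fin.val_castSucc, Fin.val_last, hboundary]
  simp only [or_assoc, or_left_comm]

theorem prod_descentIntegral [CompleteSpace B] {H : ℝ → B} (hH : Continuous H) (t : ℝ)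
    {k : ℕ} {b : Fin k → ℕ} {S : Fin k → Finset ℕ} {N : ℕ → ℕ} (hN0 : N 0 = 0)
    (hN : ∀ i : Fin k, N (i + 1) = N i + b i) (hS : ∀ i, ∀ x ∈ S i, x ≤ b i) :
    (List.ofFn fun i => descentIntegral H (b i) (S i) t).prod =
      descentIntegral H (N k) (concatDescentSet N S) t := by
  induction k with
  | zero => simp [hN0, descentIntegral_zero]
  | succ k ih =>
    have hNk : N k + b (Fin.last k) = N (k + 1) := (hN (Fin.last k)).symm
    rw [List.ofFn_succ', List.prod_concat, ih (fun i => hN i.castSucc) (fun i => hS i.castSucc),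
      descentIntegral_mul hH (fun x => le_of_mem_concatDescentSet (fun i => hN i.castSucc)
        (fun i => hS i.castSucc)), hNk]
    exact descentIntegral_congr H _ (fun x hx => (mem_concatDescentSet_succ hN0 hx).symm) t

end

theorem HD_prod_eq_general (H : ℝ → A) (hH : Continuous H) (t : ℝ)
    (n : ℕ) (c : Composition n)
    (S : Fin c.length → Finset ℕ)
    (hS : ∀ i, S i ⊆ Finset.Icc 1 (c.blocksFun i - 1)) :
    (List.ofFn (fun i : Fin c.length =>
        ∑ σ ∈ Finset.univ.filter
            (fun σ : Equiv.Perm (Fin (c.blocksFun i)) => descSet σ ⊆ S i),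
          Hperm H σ t)).prod =
      ∑ ρ ∈ Finset.univ.filter
          (fun ρ : Equiv.Perm (Fin n) =>
            descSet ρ ⊆
              (Finset.Ico 1 c.length).image c.sizeUpTo ∪
                Finset.univ.biUnion
                  (fun i : Fin c.length => (S i).image (· + c.sizeUpTo i))),
        Hperm H ρ t := by
  have hS' : ∀ i, ∀ x ∈ S i, x ≤ c.blocksFun i := fun i x hx => by
    have := Finset.mem_Icc.1 (hS i hx)
    omega
  simp_rw [sum_Hperm_eq_descentIntegral hH]
  rw [prod_descentIntegral hH t c.sizeUpTo_zero c.sizeUpTo_succ' hS', c.sizeUpTo_length]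
  rfl

/-- for a composition `(n₁,…,n_k)` of `n` and subsets
`S_j ⊆ {1,…,n_j−1}`,
`H_{D_{S₁}^{(n₁)}}(t) ⋯ H_{D_{S_k}^{(n_k)}}(t) = H_{D_T^{(n)}}(t)` where
`T = S₁ ∪ {n₁} ∪ (S₂+n₁) ∪ {n₁+n₂} ∪ ⋯ ∪ {n₁+⋯+n_{k−1}} ∪ (S_k + n₁+⋯+n_{k−1})`. -/
theorem HD_prod_eq (H : ℝ → A) (hH : Continuous H) (t : ℝ) (ht : 0 ≤ t)
    (n : ℕ) (hn : 1 ≤ n) (c : Composition n)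
    (S : Fin c.length → Finset ℕ)
    (hS : ∀ i, S i ⊆ Finset.Icc 1 (c.blocksFun i - 1)) :
    (List.ofFn (fun i : Fin c.length =>
        ∑ σ ∈ Finset.univ.filter
            (fun σ : Equiv.Perm (Fin (c.blocksFun i)) => descSet σ ⊆ S i),
          Hperm H σ t)).prod =
      ∑ ρ ∈ Finset.univ.filter
          (fun ρ : Equiv.Perm (Fin n) =>
            descSet ρ ⊆
              (Finset.Ico 1 c.length).image c.sizeUpTo ∪
                Finset.univ.biUnion
                  (fun i : Fin c.length => (S i).image (· + c.sizeUpTo i))),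
        Hperm H ρ t :=
  HD_prod_eq_general H hH t n c S hS
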